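/- arXiv:1806.07184 — 5 statements merged into one kernel-verified Lean document; each statement's English description precedes it below -/
import Mathlib

section
/- Let $b: [0,1] \to [0,1]$ be continuous and strictly increasing with $b(0)=0$, $b(1)=1$, and suppose $t \mapsto b(t)/t^{\rho}$ is non-decreasing on $(0,1]$ for some $\rho > 1/3$. Let $\Pi$ be a L\'evy measure supported on the closed unit ball of $\mathbb{R}^d$ with $\int_{0<|y|\le 1} b^{\leftarrow}(|y|)\,\Pi(dy) < \infty$, where $b^{\leftarrow}$ is the inverse of $b$. Then $\int_0^1 \frac{1}{b(t)^3} \int_{0 < |y| \le b(t)} |y|^3\,\Pi(dy)\, dt \le \frac{1}{3\rho - 1} \int_{0<|y|\le 1} b^{\leftarrow}(|y|)\,\Pi(dy) < \infty$. -/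
/-!
Since `∫ 1 ∧ |y|² dΠ < ∞`, the restriction of `Π` to the punctured unit ball is σ-finite, so
Tonelli turns the left-hand side into
`∫_{0<|y|≤1} ∫_{t ∈ (0,1], b t ≥ |y|} |y|³ / b(t)³ dt Π(dy)`.
Writing `|y| = b(s)`, the monotonicity of `b(t)/t^ρ` gives `b(s)/b(t) ≤ (s/t)^ρ` for `s ≤ t`,
so the inner integral is at most `∫_s^∞ (s/t)^{3ρ} dt = s/(3ρ-1)`, and `s = b⁻¹(|y|)`.
-/

open MeasureTheory Set
open scoped ENNReal

theorem sigmaFinite_of_lintegral_ne_top {α : Type*} [MeasurableSpace α] {μ : Measure α}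
    {f : α → ℝ≥0∞} (hf : AEMeasurable f μ) (hint : ∫⁻ x, f x ∂μ ≠ ∞)
    (hpos : ∀ᵐ x ∂μ, f x ≠ 0) : SigmaFinite μ := by
  refine ⟨⟨⟨fun n => {x | f x = 0} ∪ {x | ((n : ℝ≥0∞) + 1)⁻¹ ≤ f x}, fun _ => trivial,
    fun n => ?_, ?_⟩⟩⟩
  · have hzero : μ {x | f x = 0} = 0 := by simpa only [ne_eq, not_not] using ae_iff.1 hpos
    calc μ ({x | f x = 0} ∪ {x | ((n : ℝ≥0∞) + 1)⁻¹ ≤ f x})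
        ≤ μ {x | f x = 0} + μ {x | ((n : ℝ≥0∞) + 1)⁻¹ ≤ f x} := measure_union_le _ _
      _ ≤ 0 + (∫⁻ x, f x ∂μ) / ((n : ℝ≥0∞) + 1)⁻¹ := by
        rw [hzero]
        gcongr
        exact meas_ge_le_lintegral_div hf (by simp) (by simp)
      _ < ∞ := by
        rw [zero_add]
        exact ENNReal.div_lt_top hint (by simp)
  · refine eq_univ_of_forall fun x => mem_iUnion.2 ?_
    by_cases hx : f x = 0
    · exact ⟨0, Or.inl hx⟩
    · obtain ⟨n, hn⟩ := ENNReal.exists_inv_nat_lt hx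
      refine ⟨n, Or.inr (le_trans ?_ hn.le)⟩
      gcongr
      exact le_self_add

theorem sigmaFinite_restrict_of_lintegral_min_one_sq_ne_top {E : Type*} [NormedAddCommGroup E]
    [MeasurableSpace E] [OpensMeasurableSpace E] (μ : Measure E)
    (hint : ∫⁻ y, ENNReal.ofReal (min 1 (‖y‖ ^ 2)) ∂μ ≠ ∞) {s : Set E} (hs : MeasurableSet s)
    (hs0 : ∀ y ∈ s, y ≠ 0) : SigmaFinite (μ.restrict s) :=
  sigmaFinite_of_lintegral_ne_top (by fun_prop)
    (ne_top_of_le_ne_top hint (setLIntegral_le_lintegral _ _))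
    (ae_restrict_of_forall_mem hs fun y hy => by
      have : 0 < ‖y‖ := norm_pos_iff.2 (hs0 y hy)
      simp only [ne_eq, ENNReal.ofReal_eq_zero, not_le, lt_min_iff]
      exact ⟨one_pos, by positivity⟩)

theorem aemeasurable_mul_ite_le {α β : Type*} [MeasurableSpace α] [MeasurableSpace β]
    {μ : Measure α} {ν : Measure β} {w : α → ℝ≥0∞} {b : α → ℝ} {g : β → ℝ}
    {φ : β → ℝ≥0∞} (hw : AEMeasurable w μ) (hb : AEMeasurable b μ) (hg : Measurable g)
    (hφ : Measurable φ) :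
    AEMeasurable (fun p : α × β => w p.1 * if g p.2 ≤ b p.1 then φ p.2 else 0) (μ.prod ν) := by
  have hle : NullMeasurableSet {p : α × β | g p.2 ≤ b p.1} (μ.prod ν) :=
    nullMeasurableSet_le (hg.comp measurable_snd).aemeasurable hb.comp_fst
  convert hw.comp_fst.mul ((hφ.comp measurable_snd).aemeasurable.indicator₀ hle) using 2
  simp only [Pi.mul_apply, indicator_apply, mem_ofPred_eq, Function.comp_apply]

theorem setLIntegral_punctured_closedBall_eq {E : Type*} [NormedAddCommGroup E] [MeasurableSpace E]
    [OpensMeasurableSpace E] (μ : Measure E) (f : E → ℝ≥0∞) {r : ℝ} (hr : r ≤ 1) :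
    ∫⁻ y in {y : E | 0 < ‖y‖ ∧ ‖y‖ ≤ r}, f y ∂μ
      = ∫⁻ y in {y : E | 0 < ‖y‖ ∧ ‖y‖ ≤ 1}, (if ‖y‖ ≤ r then f y else 0) ∂μ := by
  have hball : MeasurableSet {y : E | ‖y‖ ≤ r} := measurableSet_le measurable_norm measurable_const
  have hite : (fun y => if ‖y‖ ≤ r then f y else 0) = {y : E | ‖y‖ ≤ r}.indicator f := by
    ext y
    simp only [indicator_apply, mem_ofPred_eq]
  rw [hite, lintegral_indicator hball, Measure.restrict_restrict hball]
  congr 2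
  ext y
  simp only [mem_inter_iff, mem_ofPred_eq]
  constructor
  · rintro ⟨hy0, hyr⟩
    exact ⟨hyr, hy0, hyr.trans hr⟩
  · rintro ⟨hyr, hy0, -⟩
    exact ⟨hy0, hyr⟩

theorem lintegral_mul_setLIntegral_norm_le_eq {α E : Type*} [MeasurableSpace α]
    [NormedAddCommGroup E] [MeasurableSpace E] [OpensMeasurableSpace E] {ν : Measure α}
    [SFinite ν] (μ : Measure E) [SFinite (μ.restrict {y : E | 0 < ‖y‖ ∧ ‖y‖ ≤ 1})]
    {w : α → ℝ≥0∞} {b : α → ℝ} {φ : E → ℝ≥0∞} (hw : AEMeasurable w ν) (hb : AEMeasurable b ν)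
    (hφ : Measurable φ) (hb_le : ∀ᵐ t ∂ν, b t ≤ 1) :
    ∫⁻ t, w t * ∫⁻ y in {y : E | 0 < ‖y‖ ∧ ‖y‖ ≤ b t}, φ y ∂μ ∂ν
      = ∫⁻ y in {y : E | 0 < ‖y‖ ∧ ‖y‖ ≤ 1},
          (∫⁻ t, w t * (if ‖y‖ ≤ b t then φ y else 0) ∂ν) ∂μ := by
  rw [← lintegral_lintegral_swap (aemeasurable_mul_ite_le hw hb measurable_norm hφ)]
  refine lintegral_congr_ae (hb_le.mono fun t ht => ?_)
  dsimp only
  rw [setLIntegral_punctured_closedBall_eq μ φ ht, lintegral_const_mul]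
  exact Measurable.ite (measurableSet_le measurable_norm measurable_const) hφ measurable_const

theorem lintegral_Ioi_div_rpow {s p : ℝ} (hs : 0 < s) (hp : 1 < p) :
    ∫⁻ t in Ioi s, ENNReal.ofReal ((s / t) ^ p) = ENNReal.ofReal (s / (p - 1)) := by
  have hrpow : ∀ t ∈ Ioi s, (s / t) ^ p = s ^ p * t ^ (-p) := fun t ht => by
    rw [Real.div_rpow hs.le (hs.trans ht).le, Real.rpow_neg (hs.trans ht).le, div_eq_mul_inv]
  rw [setLIntegral_congr_fun measurableSet_Ioi fun t ht => congrArg ENNReal.ofReal (hrpow t ht),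
    ← ofReal_integral_eq_lintegral_ofReal
      ((integrableOn_Ioi_rpow_of_lt (by linarith) hs).const_mul _)
      (ae_restrict_of_forall_mem measurableSet_Ioi fun t ht => by
        have := hs.trans ht; positivity),
    integral_const_mul, integral_Ioi_rpow_of_lt (by linarith) hs]
  congr 1
  rw [mul_div_assoc', mul_neg, ← Real.rpow_add hs, show p + (-p + 1) = 1 by ring, Real.rpow_one,
    neg_div, ← div_neg, neg_add, neg_neg, ← sub_eq_add_neg]

section GrowthOrder

variable {b : ℝ → ℝ} {ρ : ℝ}

theorem div_le_div_rpow_of_monotoneOn (hb_rho : MonotoneOn (fun t => b t / t ^ ρ) (Ioc 0 1))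
    {s t : ℝ} (hs : s ∈ Ioc 0 1) (ht : t ∈ Ioc 0 1) (hst : s ≤ t) (hbt : 0 < b t) :
    b s / b t ≤ (s / t) ^ ρ := by
  have h := hb_rho hs ht hst
  have hsρ : 0 < s ^ ρ := Real.rpow_pos_of_pos hs.1 ρ
  have htρ : 0 < t ^ ρ := Real.rpow_pos_of_pos ht.1 ρ
  rw [Real.div_rpow hs.1.le ht.1.le, div_le_div_iff₀ hbt htρ]
  rw [div_le_div_iff₀ hsρ htρ] at h
  linarith

theorem lintegral_inv_cube_mul_ite_le (hρ : 1 / 3 < ρ) (hb_mono : StrictMonoOn b (Ioc 0 1))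
    (hb_rho : MonotoneOn (fun t => b t / t ^ ρ) (Ioc 0 1)) {s : ℝ} (hs : s ∈ Ioc 0 1)
    (hbs : 0 < b s) :
    ∫⁻ t in Ioc 0 1, (ENNReal.ofReal (b t ^ 3))⁻¹ *
        (if b s ≤ b t then ENNReal.ofReal (b s ^ 3) else 0)
      ≤ ENNReal.ofReal (1 / (3 * ρ - 1)) * ENNReal.ofReal s := by
  have hpt : ∀ t ∈ Ioc 0 1, (ENNReal.ofReal (b t ^ 3))⁻¹ *
      (if b s ≤ b t then ENNReal.ofReal (b s ^ 3) else 0)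
        ≤ (Ici s).indicator (fun t => ENNReal.ofReal ((s / t) ^ (3 * ρ))) t := by
    intro t ht
    split_ifs with hbst
    · have hst : s ≤ t := (hb_mono.le_iff_le hs ht).1 hbst
      have hbt : 0 < b t := hbs.trans_le hbst
      rw [indicator_of_mem (mem_Ici.2 hst), ← ENNReal.div_eq_inv_mul,
        ← ENNReal.ofReal_div_of_pos (by positivity), ← div_pow]
      apply ENNReal.ofReal_le_ofReal
      calc (b s / b t) ^ 3 ≤ ((s / t) ^ ρ) ^ 3 :=
            pow_le_pow_left₀ (by positivity) (div_le_div_rpow_of_monotoneOn hb_rho hs ht hst hbt) 3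
        _ = (s / t) ^ (3 * ρ) := by
            rw [← Real.rpow_natCast, ← Real.rpow_mul (div_pos hs.1 ht.1).le]
            norm_num [mul_comm]
    · rw [mul_zero]
      exact zero_le
  calc _ ≤ ∫⁻ t in Ioc 0 1, (Ici s).indicator (fun t => ENNReal.ofReal ((s / t) ^ (3 * ρ))) t :=
        setLIntegral_mono' measurableSet_Ioc hpt
    _ ≤ ∫⁻ t, (Ici s).indicator (fun t => ENNReal.ofReal ((s / t) ^ (3 * ρ))) t :=
        setLIntegral_le_lintegral _ _
    _ = ∫⁻ t in Ioi s, ENNReal.ofReal ((s / t) ^ (3 * ρ)) := by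
        rw [lintegral_indicator measurableSet_Ici, setLIntegral_congr Ioi_ae_eq_Ici]
    _ = ENNReal.ofReal (1 / (3 * ρ - 1)) * ENNReal.ofReal s := by
        rw [lintegral_Ioi_div_rpow hs.1 (by linarith), ← ENNReal.ofReal_mul (by
          have : 0 < 3 * ρ - 1 := by linarith
          positivity), one_div_mul_eq_div]

end GrowthOrder

theorem exists_mem_Ioc_eq_of_continuousOn {b : ℝ → ℝ} (hb_cont : ContinuousOn b (Icc 0 1))
    (hb0 : b 0 = 0) (hb1 : b 1 = 1) {r : ℝ} (hr : r ∈ Ioc 0 1) : ∃ s ∈ Ioc 0 1, b s = r := by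
  obtain ⟨s, hs, hbs⟩ := intermediate_value_Icc zero_le_one hb_cont
    (show r ∈ Icc (b 0) (b 1) by rw [hb0, hb1]; exact Ioc_subset_Icc_self hr)
  refine ⟨s, ⟨lt_of_le_of_ne hs.1 ?_, hs.2⟩, hbs⟩
  rintro rfl
  exact hr.1.ne' (hbs ▸ hb0)

theorem stmt2_general {d : ℕ} (μ : Measure (EuclideanSpace ℝ (Fin d)))
    (hint : (∫⁻ y, ENNReal.ofReal (min 1 (‖y‖ ^ 2)) ∂μ) < ⊤)
    (b binv : ℝ → ℝ) (ρ : ℝ) (hρ : 1 / 3 < ρ)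
    (hb_cont : ContinuousOn b (Icc 0 1))
    (hb_mono : StrictMonoOn b (Icc 0 1))
    (hb0 : b 0 = 0) (hb1 : b 1 = 1)
    (hb_rho : ∀ s t : ℝ, 0 < s → s ≤ t → t ≤ 1 → b s / s ^ ρ ≤ b t / t ^ ρ)
    (hbinv : ∀ t ∈ Icc (0 : ℝ) 1, binv (b t) = t)
    (hfin : (∫⁻ y in {y : EuclideanSpace ℝ (Fin d) | 0 < ‖y‖ ∧ ‖y‖ ≤ 1},
        ENNReal.ofReal (binv ‖y‖) ∂μ) < ⊤) :
    (∫⁻ t in Ioc (0 : ℝ) 1,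
        (ENNReal.ofReal (b t ^ 3))⁻¹ *
          ∫⁻ y in {y : EuclideanSpace ℝ (Fin d) | 0 < ‖y‖ ∧ ‖y‖ ≤ b t},
            ENNReal.ofReal (‖y‖ ^ 3) ∂μ)
      ≤ ENNReal.ofReal (1 / (3 * ρ - 1)) *
          ∫⁻ y in {y : EuclideanSpace ℝ (Fin d) | 0 < ‖y‖ ∧ ‖y‖ ≤ 1},
            ENNReal.ofReal (binv ‖y‖) ∂μ ∧
    (∫⁻ t in Ioc (0 : ℝ) 1,
        (ENNReal.ofReal (b t ^ 3))⁻¹ *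
          ∫⁻ y in {y : EuclideanSpace ℝ (Fin d) | 0 < ‖y‖ ∧ ‖y‖ ≤ b t},
            ENNReal.ofReal (‖y‖ ^ 3) ∂μ) < ⊤ := by
  set S := {y : EuclideanSpace ℝ (Fin d) | 0 < ‖y‖ ∧ ‖y‖ ≤ 1}
  have hS : MeasurableSet S :=
    (measurableSet_lt measurable_const measurable_norm).inter
      (measurableSet_le measurable_norm measurable_const)
  have : SigmaFinite (μ.restrict S) := sigmaFinite_restrict_of_lintegral_min_one_sq_ne_top μ
    hint.ne hS fun y hy => norm_pos_iff.1 hy.1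
  have hb_meas : AEMeasurable b (volume.restrict (Ioc (0 : ℝ) 1)) :=
    (hb_cont.mono Ioc_subset_Icc_self).aemeasurable measurableSet_Ioc
  have hb_le_one : ∀ᵐ t ∂(volume.restrict (Ioc (0 : ℝ) 1)), b t ≤ 1 :=
    ae_restrict_of_forall_mem measurableSet_Ioc fun t ht =>
      hb1 ▸ hb_mono.monotoneOn (Ioc_subset_Icc_self ht) (right_mem_Icc.2 zero_le_one) ht.2
  have hmain : (∫⁻ t in Ioc (0 : ℝ) 1, (ENNReal.ofReal (b t ^ 3))⁻¹ *
      ∫⁻ y in {y : EuclideanSpace ℝ (Fin d) | 0 < ‖y‖ ∧ ‖y‖ ≤ b t}, ENNReal.ofReal (‖y‖ ^ 3) ∂μ)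
      ≤ ENNReal.ofReal (1 / (3 * ρ - 1)) * ∫⁻ y in S, ENNReal.ofReal (binv ‖y‖) ∂μ := by
    rw [lintegral_mul_setLIntegral_norm_le_eq μ (by fun_prop) hb_meas (by fun_prop) hb_le_one,
      ← lintegral_const_mul' _ _ ENNReal.ofReal_ne_top]
    refine setLIntegral_mono' hS fun y hy => ?_
    obtain ⟨s, hs, hbs⟩ := exists_mem_Ioc_eq_of_continuousOn hb_cont hb0 hb1 hy
    rw [← hbs, hbinv s (Ioc_subset_Icc_self hs)]
    exact lintegral_inv_cube_mul_ite_le hρ (hb_mono.mono Ioc_subset_Icc_self)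
      (fun s hs t ht hst => hb_rho s t hs.1 hst ht.2) hs (hbs ▸ hy.1)
  exact ⟨hmain, hmain.trans_lt (ENNReal.mul_lt_top ENNReal.ofReal_lt_top hfin)⟩

/-- Lemma 3.1(a): if `b : [0,1] → [0,1]` is a continuous increasing bijection with
`b(t)/t^ρ` non-decreasing for some `ρ > 1/3`, and `μ` is a Lévy measure supported on the
unit ball with `∫ b⁻¹(|y|) dμ < ∞`, then
`∫₀¹ b(t)⁻³ ∫_{0<|y|≤b(t)} |y|³ dμ dt ≤ (3ρ-1)⁻¹ ∫ b⁻¹(|y|) dμ < ∞`. -/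
theorem stmt2 {d : ℕ} (μ : Measure (EuclideanSpace ℝ (Fin d)))
    (h0 : μ {0} = 0)
    (hsupp : μ {y : EuclideanSpace ℝ (Fin d) | 1 < ‖y‖} = 0)
    (hint : (∫⁻ y, ENNReal.ofReal (min 1 (‖y‖ ^ 2)) ∂μ) < ⊤)
    (b binv : ℝ → ℝ) (ρ : ℝ) (hρ : 1 / 3 < ρ)
    (hb_cont : ContinuousOn b (Icc 0 1))
    (hb_mono : StrictMonoOn b (Icc 0 1))
    (hb0 : b 0 = 0) (hb1 : b 1 = 1)
    (hb_rho : ∀ s t : ℝ, 0 < s → s ≤ t → t ≤ 1 → b s / s ^ ρ ≤ b t / t ^ ρ)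
    (hbinv : ∀ t ∈ Icc (0 : ℝ) 1, binv (b t) = t)
    (hbinv' : ∀ x ∈ Icc (0 : ℝ) 1, b (binv x) = x)
    (hfin : (∫⁻ y in {y : EuclideanSpace ℝ (Fin d) | 0 < ‖y‖ ∧ ‖y‖ ≤ 1},
        ENNReal.ofReal (binv ‖y‖) ∂μ) < ⊤) :
    (∫⁻ t in Ioc (0 : ℝ) 1,
        (ENNReal.ofReal (b t ^ 3))⁻¹ *
          ∫⁻ y in {y : EuclideanSpace ℝ (Fin d) | 0 < ‖y‖ ∧ ‖y‖ ≤ b t},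
            ENNReal.ofReal (‖y‖ ^ 3) ∂μ)
      ≤ ENNReal.ofReal (1 / (3 * ρ - 1)) *
          ∫⁻ y in {y : EuclideanSpace ℝ (Fin d) | 0 < ‖y‖ ∧ ‖y‖ ≤ 1},
            ENNReal.ofReal (binv ‖y‖) ∂μ ∧
    (∫⁻ t in Ioc (0 : ℝ) 1,
        (ENNReal.ofReal (b t ^ 3))⁻¹ *
          ∫⁻ y in {y : EuclideanSpace ℝ (Fin d) | 0 < ‖y‖ ∧ ‖y‖ ≤ b t},
            ENNReal.ofReal (‖y‖ ^ 3) ∂μ) < ⊤ :=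
  stmt2_general μ hint b binv ρ hρ hb_cont hb_mono hb0 hb1 hb_rho hbinv hfin
end

section
/- Let $\Pi$ be a L\'evy measure supported on the unit ball of $\mathbb{R}^d$ such that $\overline{V}(t) := \int_{|y| \le t} |y|^2\,\Pi(dy) > 0$ for all $t > 0$. Let $g: [0,\infty) \to (0,\infty)$ be non-decreasing with $\int_0^c g(t)^{-1}\,dt < \infty$ for all $c > 0$. Then $\int_{|y| \le 1} \frac{|y|^2}{g(\overline{V}(|y|))}\,\Pi(dy) < \infty$. -/
open MeasureTheory Set
open scoped ENNReal

/-!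
Write `ν = ‖y‖² μ`, so that `V̄(t) = ν {‖y‖ ≤ t}` is the distribution function of `‖y‖` under `ν`.
As for the probability integral transform, `ν {V̄(‖y‖) ≤ a} ≤ a`; hence the shell where
`V̄(‖y‖) ∈ (c / 2ⁿ⁺¹, c / 2ⁿ]`, `c = V̄(1)`, has `ν`-mass at most `c / 2ⁿ`, and on it the integrand
is at most `‖y‖² / g(c / 2ⁿ⁺¹)`. As `g` is non-decreasing,
`(c / 2ⁿ) / g(c / 2ⁿ⁺¹) ≤ 4 ∫_{c / 2ⁿ⁺²}^{c / 2ⁿ⁺¹} dt / g(t)`, and summing over `n` bounds the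
integral by `4 ∫₀ᶜ dt / g(t)`.
-/

theorem measure_setOf_distribution_le {X : Type*} [MeasurableSpace X] (ν : Measure X) (φ : X → ℝ)
    (a : ℝ≥0∞) : ν {x | ν {y | φ y ≤ φ x} ≤ a} ≤ a := by
  set S : Set ℝ := {t | ν {y | φ y ≤ t} ≤ a}
  have hS : IsLowerSet S := fun s t hts hs =>
    (measure_mono fun y (hy : φ y ≤ t) => hy.trans hts).trans hs
  -- gives `S` the order topology, hence a countably generated `atTop`
  have : OrdConnected S := hS.ordConnected
  have hmono : Monotone fun t : S => {y | φ y ≤ t} := fun _ _ hst _ hy =>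
    le_trans (α := ℝ) hy hst
  have hunion : {x | ν {y | φ y ≤ φ x} ≤ a} = ⋃ t : S, {y | φ y ≤ t} := by
    ext x
    simp only [mem_ofPred_eq, mem_iUnion, Subtype.exists]
    exact ⟨fun hx => ⟨φ x, hx, le_rfl⟩, fun ⟨t, ht, hxt⟩ => hS hxt ht⟩
  rw [hunion, hmono.measure_iUnion]
  exact iSup_le fun t => t.2

theorem setLIntegral_setOf_distribution_le {X : Type*} [MeasurableSpace X] (μ : Measure X)
    {φ : X → ℝ} (hφ : Measurable φ) (w : X → ℝ≥0∞) (a : ℝ≥0∞) :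
    ∫⁻ x in {x | ∫⁻ y in {y | φ y ≤ φ x}, w y ∂μ ≤ a}, w x ∂μ ≤ a := by
  have hdens (t : ℝ) : μ.withDensity w {y | φ y ≤ t} = ∫⁻ y in {y | φ y ≤ t}, w y ∂μ :=
    withDensity_apply w (measurableSet_le hφ measurable_const)
  simp_rw [← hdens]
  exact (withDensity_apply_le w _).trans (measure_setOf_distribution_le _ φ a)

theorem exists_mem_Ioc_div_two_pow {x c : ℝ} (hx : 0 < x) (hxc : x ≤ c) :
    ∃ n : ℕ, x ∈ Ioc (c / 2 ^ (n + 1)) (c / 2 ^ n) := by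
  obtain ⟨n, hle, hlt⟩ := exists_nat_pow_near ((one_le_div hx).2 hxc) one_lt_two
  refine ⟨n, ?_, ?_⟩
  · rwa [div_lt_iff₀ (by positivity), ← div_lt_iff₀' hx]
  · rwa [le_div_iff₀ (by positivity), ← le_div_iff₀' hx]

theorem tsum_dyadic_mul_le_lintegral {h : ℝ → ℝ≥0∞} (hh : AntitoneOn h (Ioi 0)) {c : ℝ}
    (hc : 0 < c) :
    ∑' n : ℕ, ENNReal.ofReal (c / 2 ^ n) * h (c / 2 ^ (n + 1)) ≤ 4 * ∫⁻ t in Ioc 0 c, h t := by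
  set u : ℕ → ℝ := fun n => c / 2 ^ (n + 1)
  have hu : Antitone u := fun m n hmn => div_le_div_of_nonneg_left hc.le (by positivity)
    (pow_le_pow_right₀ one_le_two (by omega))
  have hterm (n : ℕ) : ENNReal.ofReal (c / 2 ^ n) * h (u n) ≤
      4 * ∫⁻ t in Ioc (u (n + 1)) (u n), h t := by
    have hlen : c / 2 ^ n = 4 * (u n - u (n + 1)) := by simp only [u]; field_simp; ring
    calc ENNReal.ofReal (c / 2 ^ n) * h (u n)
        = 4 * ∫⁻ _ in Ioc (u (n + 1)) (u n), h (u n) := by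
          rw [setLIntegral_const, Real.volume_Ioc, hlen, ENNReal.ofReal_mul (by norm_num)]
          simp only [ENNReal.ofReal_ofNat]
          ring
      _ ≤ 4 * ∫⁻ t in Ioc (u (n + 1)) (u n), h t := by
          gcongr 4 * ?_
          refine setLIntegral_mono' measurableSet_Ioc fun t ht => ?_
          have hu_pos : 0 < u (n + 1) := by positivity
          exact hh (hu_pos.trans ht.1) (hu_pos.trans_le (hu n.le_succ)) ht.2
  calc _
      ≤ ∑' n : ℕ, 4 * ∫⁻ t in Ioc (u (n + 1)) (u n), h t := ENNReal.tsum_le_tsum hterm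
    _ = 4 * ∫⁻ t in ⋃ n, Ioc (u (n + 1)) (u n), h t := by
        have hdisj : Pairwise (Function.onFun Disjoint fun n => Ioc (u (n + 1)) (u n)) := by
          simpa only [Order.succ_eq_add_one] using hu.pairwise_disjoint_on_Ioc_succ
        rw [ENNReal.tsum_mul_left, lintegral_iUnion (fun _ => measurableSet_Ioc) hdisj]
    _ ≤ 4 * ∫⁻ t in Ioc 0 c, h t := by
        gcongr
        exact iUnion_subset fun n => Ioc_subset_Ioc (by positivity)
          (div_le_self hc.le (one_le_pow₀ one_le_two))

theorem setLIntegral_sq_norm_div_le {E : Type*} [NormedAddCommGroup E] [MeasurableSpace E]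
    [OpensMeasurableSpace E] (μ : Measure E) {V g : ℝ → ℝ}
    (hV : ∀ t : ℝ, ENNReal.ofReal (V t) =
      ∫⁻ y in {y : E | ‖y‖ ≤ t}, ENNReal.ofReal (‖y‖ ^ 2) ∂μ)
    (hg : MonotoneOn g (Ici 0)) {a b : ℝ} (ha : 0 < a) (hga : 0 < g a) :
    ∫⁻ y in {y : E | V ‖y‖ ∈ Ioc a b}, ENNReal.ofReal (‖y‖ ^ 2 / g (V ‖y‖)) ∂μ ≤
      ENNReal.ofReal b * ENNReal.ofReal (g a)⁻¹ := by
  calc _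
      ≤ ∫⁻ y in {y : E | V ‖y‖ ∈ Ioc a b},
          ENNReal.ofReal (g a)⁻¹ * ENNReal.ofReal (‖y‖ ^ 2) ∂μ := by
        refine setLIntegral_mono (by fun_prop) fun y hy => ?_
        have hgy : g a ≤ g (V ‖y‖) := hg ha.le (ha.le.trans hy.1.le) hy.1.le
        rw [← ENNReal.ofReal_mul (by positivity), div_eq_inv_mul]
        gcongr
    _ = ENNReal.ofReal (g a)⁻¹ *
          ∫⁻ y in {y : E | V ‖y‖ ∈ Ioc a b}, ENNReal.ofReal (‖y‖ ^ 2) ∂μ :=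
        lintegral_const_mul _ (by fun_prop)
    _ ≤ ENNReal.ofReal (g a)⁻¹ * ENNReal.ofReal b := by
        gcongr
        refine (lintegral_mono_set fun y (hy : V ‖y‖ ∈ Ioc a b) => ?_).trans
          (setLIntegral_setOf_distribution_le μ measurable_norm _ (ENNReal.ofReal b))
        rw [mem_ofPred_eq, ← hV]
        exact ENNReal.ofReal_le_ofReal hy.2
    _ = ENNReal.ofReal b * ENNReal.ofReal (g a)⁻¹ := mul_comm _ _

theorem stmt4_general {d : ℕ} (μ : Measure (EuclideanSpace ℝ (Fin d)))
    (Vbar : ℝ → ℝ)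
    (hVbar : ∀ t : ℝ, ENNReal.ofReal (Vbar t) =
      ∫⁻ y in {y : EuclideanSpace ℝ (Fin d) | ‖y‖ ≤ t}, ENNReal.ofReal (‖y‖ ^ 2) ∂μ)
    (hVpos : ∀ t : ℝ, 0 < t → 0 < Vbar t)
    (g : ℝ → ℝ) (hgpos : ∀ t : ℝ, 0 ≤ t → 0 < g t)
    (hgmono : MonotoneOn g (Ici 0))
    (hgint : ∀ c : ℝ, 0 < c → (∫⁻ t in Ioc (0 : ℝ) c, ENNReal.ofReal ((g t)⁻¹)) < ⊤) :
    (∫⁻ y in {y : EuclideanSpace ℝ (Fin d) | ‖y‖ ≤ 1},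
      ENNReal.ofReal (‖y‖ ^ 2 / g (Vbar ‖y‖)) ∂μ) < ⊤ := by
  set c := Vbar 1
  have hc : 0 < c := hVpos 1 one_pos
  set A : ℕ → Set (EuclideanSpace ℝ (Fin d)) :=
    fun n => {y | Vbar ‖y‖ ∈ Ioc (c / 2 ^ (n + 1)) (c / 2 ^ n)}
  have hcover : {y : EuclideanSpace ℝ (Fin d) | ‖y‖ ≤ 1} ⊆ {0} ∪ ⋃ n, A n := by
    intro y (hy : ‖y‖ ≤ 1)
    rcases eq_or_ne y 0 with rfl | hy0
    · exact Or.inl rfl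
    have hVc : Vbar ‖y‖ ≤ c := by
      rw [← ENNReal.ofReal_le_ofReal_iff hc.le, hVbar, hVbar]
      exact lintegral_mono_set fun z (hz : ‖z‖ ≤ ‖y‖) => hz.trans hy
    exact Or.inr (mem_iUnion.2 (exists_mem_Ioc_div_two_pow (hVpos _ (norm_pos_iff.2 hy0)) hVc))
  have hinv : AntitoneOn (fun t => ENNReal.ofReal (g t)⁻¹) (Ioi 0) := fun s hs t ht hst =>
    ENNReal.ofReal_le_ofReal <| inv_anti₀ (hgpos s (le_of_lt hs))
      (hgmono (Ioi_subset_Ici_self hs) (Ioi_subset_Ici_self ht) hst)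
  calc _
      ≤ ∫⁻ y in {0}, ENNReal.ofReal (‖y‖ ^ 2 / g (Vbar ‖y‖)) ∂μ +
          ∑' n, ∫⁻ y in A n, ENNReal.ofReal (‖y‖ ^ 2 / g (Vbar ‖y‖)) ∂μ :=
        (lintegral_mono_set hcover).trans <|
          (lintegral_union_le _ _ _).trans (add_le_add le_rfl (lintegral_iUnion_le _ _))
    _ = ∑' n, ∫⁻ y in A n, ENNReal.ofReal (‖y‖ ^ 2 / g (Vbar ‖y‖)) ∂μ := by simp
    _ ≤ ∑' n : ℕ, ENNReal.ofReal (c / 2 ^ n) * ENNReal.ofReal (g (c / 2 ^ (n + 1)))⁻¹ :=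
        ENNReal.tsum_le_tsum fun n =>
          setLIntegral_sq_norm_div_le μ hVbar hgmono (by positivity) (hgpos _ (by positivity))
    _ ≤ 4 * ∫⁻ t in Ioc 0 c, ENNReal.ofReal (g t)⁻¹ := tsum_dyadic_mul_le_lintegral hinv hc
    _ < ⊤ := ENNReal.mul_lt_top (by norm_num) (hgint c hc)

/-- If `μ` is a Lévy measure supported on the unit ball with `V̄(t) = ∫_{|y|≤t}|y|² dμ > 0`
for all `t > 0`, and `g` is non-decreasing positive with `∫₀ᶜ g(t)⁻¹ dt < ∞` for all `c > 0`,
then `∫_{|y|≤1} |y|²/g(V̄(|y|)) dμ < ∞`. -/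
theorem stmt4 {d : ℕ} (μ : Measure (EuclideanSpace ℝ (Fin d)))
    (h0 : μ {0} = 0)
    (hsupp : μ {y : EuclideanSpace ℝ (Fin d) | 1 < ‖y‖} = 0)
    (Vbar : ℝ → ℝ)
    (hVbar : ∀ t : ℝ, ENNReal.ofReal (Vbar t) =
      ∫⁻ y in {y : EuclideanSpace ℝ (Fin d) | ‖y‖ ≤ t}, ENNReal.ofReal (‖y‖ ^ 2) ∂μ)
    (hVpos : ∀ t : ℝ, 0 < t → 0 < Vbar t)
    (g : ℝ → ℝ) (hgpos : ∀ t : ℝ, 0 ≤ t → 0 < g t)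
    (hgmono : MonotoneOn g (Ici 0))
    (hgint : ∀ c : ℝ, 0 < c → (∫⁻ t in Ioc (0 : ℝ) c, ENNReal.ofReal ((g t)⁻¹)) < ⊤) :
    (∫⁻ y in {y : EuclideanSpace ℝ (Fin d) | ‖y‖ ≤ 1},
      ENNReal.ofReal (‖y‖ ^ 2 / g (Vbar ‖y‖)) ∂μ) < ⊤ :=
  stmt4_general μ Vbar hVbar hVpos g hgpos hgmono hgint
end

section
/- Let $\Pi$ be a L\'evy measure supported on the unit ball of $\mathbb{R}^d$ with $V(t) = \sup_{|z|\le 1}\int_{|y|\le t}\langle y,z\rangle^2\,\Pi(dy) > 0$ for all $t>0$. Then for every $\delta > 0$, $\int_{|y| \le 1} \frac{|y|^2}{V(|y|)\,(\log_+(1/V(|y|)))^{1+\delta}}\,\Pi(dy) < \infty$, where $\log_+(x) = \max(1, \log x)$. -/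
open MeasureTheory Set
open scoped ENNReal

/-!
Let `W(t) = ∫_{|y| ≤ t} |y|² dΠ`. Testing `V` against an orthonormal basis gives `V ≤ W ≤ d V`,
so the integrand is at most `d |y|² ψ(W(|y|))` with `ψ(w) = 1 / (w log₊(1/w)^{1+δ})`.
Under the finite measure `ν = |y|² Π(dy)` on the unit ball, `W(|y|)` is the distribution function
of `|y|` evaluated at `|y|`, hence `ν(W(|y|) ≤ ε) ≤ ε`. Splitting according to the dyadic layers
`2^{-m-1} < W ≤ 2^{-m}` bounds the integral by `d (ν(ball) + ∑ₘ 2 / log₊(2^m)^{1+δ})`, which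
converges because `log₊(2^m) ≍ m` and `δ > 0`.
-/

noncomputable def logPlus (x : ℝ) : ℝ := max 1 (Real.log x)

lemma one_le_logPlus (x : ℝ) : 1 ≤ logPlus x := le_max_left _ _

lemma logPlus_pos (x : ℝ) : 0 < logPlus x := one_pos.trans_le (one_le_logPlus x)

lemma logPlus_rpow_pos (x p : ℝ) : 0 < logPlus x ^ p := Real.rpow_pos_of_pos (logPlus_pos x) p

lemma logPlus_le_logPlus {x y : ℝ} (hx : 0 < x) (hxy : x ≤ y) : logPlus x ≤ logPlus y :=
  max_le_max le_rfl (Real.log_le_log hx hxy)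

lemma inv_mul_logPlus_rpow_le_mul {v w c p : ℝ} (hv : 0 < v) (hvw : v ≤ w) (hwc : w ≤ c * v)
    (hp : 0 ≤ p) : (v * logPlus (1 / v) ^ p)⁻¹ ≤ c * (w * logPlus (1 / w) ^ p)⁻¹ := by
  have hw : 0 < w := hv.trans_le hvw
  have hc : 0 < c := pos_of_mul_pos_left (hw.trans_le hwc) hv.le
  have hL : logPlus (1 / w) ^ p ≤ logPlus (1 / v) ^ p :=
    Real.rpow_le_rpow (logPlus_pos _).le
      (logPlus_le_logPlus (by positivity) (one_div_le_one_div_of_le hv hvw)) hp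
  have hLw : 0 < logPlus (1 / w) ^ p := logPlus_rpow_pos _ p
  calc (v * logPlus (1 / v) ^ p)⁻¹ ≤ (w / c * logPlus (1 / w) ^ p)⁻¹ := by
        gcongr
        rwa [div_le_iff₀' hc]
    _ = c * (w * logPlus (1 / w) ^ p)⁻¹ := by field_simp

lemma ofReal_div_mul_logPlus_rpow_le {a v p : ℝ} {w : ℝ≥0∞} {c : ℕ} (ha : 0 ≤ a) (hp : 0 ≤ p)
    (hw : w ≠ ⊤) (hvw : ENNReal.ofReal v ≤ w) (hwv : w ≤ c * ENNReal.ofReal v) :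
    ENNReal.ofReal (a / (v * logPlus (1 / v) ^ p)) ≤
      ENNReal.ofReal a * (c * ENNReal.ofReal (w.toReal * logPlus (1 / w.toReal) ^ p)⁻¹) := by
  rcases le_or_gt v 0 with hv | hv
  · -- the real division is then nonpositive, so the left side is `0`
    rw [ENNReal.ofReal_of_nonpos (div_nonpos_of_nonneg_of_nonpos ha
      (mul_nonpos_of_nonpos_of_nonneg hv (Real.rpow_nonneg (logPlus_pos _).le p)))]
    exact zero_le
  have hvw' : v ≤ w.toReal := (ENNReal.ofReal_le_iff_le_toReal hw).1 hvw
  have hwv' : w.toReal ≤ c * v := by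
    rw [← ENNReal.ofReal_natCast, ← ENNReal.ofReal_mul (Nat.cast_nonneg c)] at hwv
    exact ENNReal.toReal_le_of_le_ofReal (by positivity) hwv
  rw [← ENNReal.ofReal_natCast, ← ENNReal.ofReal_mul (Nat.cast_nonneg c), ← ENNReal.ofReal_mul ha,
    div_eq_mul_inv]
  exact ENNReal.ofReal_le_ofReal
    (mul_le_mul_of_nonneg_left (inv_mul_logPlus_rpow_le_mul hv hvw' hwv' hp) ha)

lemma inv_mul_logPlus_rpow_le_of_one_le {w p : ℝ} (hw : 1 ≤ w) (hp : 0 ≤ p) :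
    (w * logPlus (1 / w) ^ p)⁻¹ ≤ 1 :=
  inv_le_one_of_one_le₀ (one_le_mul_of_one_le_of_one_le hw
    (Real.one_le_rpow (one_le_logPlus _) hp))

lemma inv_mul_logPlus_rpow_le_of_two_pow_le {w p : ℝ} {m : ℕ} (hm : 2 ^ m ≤ 1 / w)
    (hm' : 1 / w < 2 ^ (m + 1)) (hp : 0 ≤ p) :
    (w * logPlus (1 / w) ^ p)⁻¹ ≤ 2 ^ (m + 1) * (logPlus (2 ^ m) ^ p)⁻¹ := by
  have hL : 0 < logPlus (2 ^ m) ^ p := logPlus_rpow_pos _ p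
  have hLw : logPlus (2 ^ m) ^ p ≤ logPlus (1 / w) ^ p :=
    Real.rpow_le_rpow (logPlus_pos _).le (logPlus_le_logPlus (by positivity) hm) hp
  calc (w * logPlus (1 / w) ^ p)⁻¹ = 1 / w * (logPlus (1 / w) ^ p)⁻¹ := by rw [mul_inv, one_div]
    _ ≤ 2 ^ (m + 1) * (logPlus (2 ^ m) ^ p)⁻¹ :=
      mul_le_mul hm'.le (inv_anti₀ hL hLw)
        (inv_pos.2 (logPlus_rpow_pos _ p)).le (by positivity)

lemma summable_inv_logPlus_two_pow_rpow {p : ℝ} (hp : 1 < p) :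
    Summable fun m : ℕ => (logPlus (2 ^ m) ^ p)⁻¹ := by
  have hlin (m : ℕ) : ((m : ℝ) + 1) / 3 ≤ logPlus (2 ^ m) := by
    have h2 := Real.log_two_gt_d9
    rw [logPlus, Real.log_pow]
    rcases Nat.eq_zero_or_pos m with rfl | hm
    · norm_num
    · have : (1 : ℝ) ≤ m := by exact_mod_cast hm
      exact le_max_of_le_right (by nlinarith)
  have hbound (m : ℕ) : (logPlus (2 ^ m) ^ p)⁻¹ ≤ 3 ^ p * (((m + 1 : ℕ) : ℝ) ^ p)⁻¹ := by
    calc (logPlus (2 ^ m) ^ p)⁻¹ ≤ ((((m : ℝ) + 1) / 3) ^ p)⁻¹ := by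
          gcongr
          exact hlin m
      _ = 3 ^ p * (((m + 1 : ℕ) : ℝ) ^ p)⁻¹ := by
          rw [Real.div_rpow (by positivity) (by norm_num)]
          push_cast
          field_simp
  exact Summable.of_nonneg_of_le (fun m => (inv_pos.2 (logPlus_rpow_pos _ p)).le) hbound
    (((summable_nat_add_iff 1).mpr (Real.summable_nat_rpow_inv.mpr hp)).mul_left _)

lemma ofReal_inv_mul_logPlus_rpow_le_tsum {p : ℝ} (hp : 0 ≤ p) (w : ℝ≥0∞) :
    ENNReal.ofReal (w.toReal * logPlus (1 / w.toReal) ^ p)⁻¹ ≤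
      1 + ∑' m : ℕ,
        if w ≤ 2⁻¹ ^ m then 2 * 2 ^ m * ENNReal.ofReal (logPlus (2 ^ m) ^ p)⁻¹ else 0 := by
  rcases w.toReal_nonneg.eq_or_lt with hw | hw
  · simp [← hw]
  rcases le_or_gt 1 w.toReal with hw1 | hw1
  · exact (ENNReal.ofReal_le_one.2 (inv_mul_logPlus_rpow_le_of_one_le hw1 hp)).trans le_self_add
  obtain ⟨m, hm, hm'⟩ := exists_nat_pow_near (x := 1 / w.toReal) (y := 2)
    (by rw [le_div_iff₀ hw]; linarith) one_lt_two
  have hwm : w ≤ 2⁻¹ ^ m := by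
    have hle : w.toReal ≤ (2 ^ m)⁻¹ := by
      rw [le_inv_comm₀ hw (by positivity), ← one_div]; exact hm
    rw [← ENNReal.le_ofReal_iff_toReal_le (ENNReal.toReal_pos_iff.1 hw).2.ne (by positivity)] at hle
    simpa [ENNReal.ofReal_inv_of_pos, ENNReal.inv_pow] using hle
  calc ENNReal.ofReal (w.toReal * logPlus (1 / w.toReal) ^ p)⁻¹
      ≤ ENNReal.ofReal (2 ^ (m + 1) * (logPlus (2 ^ m) ^ p)⁻¹) :=
        ENNReal.ofReal_le_ofReal (inv_mul_logPlus_rpow_le_of_two_pow_le hm hm' hp)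
    _ = 2 * 2 ^ m * ENNReal.ofReal (logPlus (2 ^ m) ^ p)⁻¹ := by
        rw [ENNReal.ofReal_mul (by positivity), pow_succ', ENNReal.ofReal_mul (by positivity)]
        simp
    _ ≤ ∑' m : ℕ, if w ≤ 2⁻¹ ^ m then 2 * 2 ^ m * ENNReal.ofReal (logPlus (2 ^ m) ^ p)⁻¹ else 0 :=
        (if_pos hwm).symm.le.trans (ENNReal.le_tsum m)
    _ ≤ _ := le_add_self

lemma measure_setOf_measure_sublevel_le {α : Type*} [MeasurableSpace α] (ν : Measure α)
    (r : α → ℝ) (ε : ℝ≥0∞) : ν {x | ν {y | r y ≤ r x} ≤ ε} ≤ ε := by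
  set S := {x | ν {y | r y ≤ r x} ≤ ε}
  by_cases hmax : ∃ x₀ ∈ S, ∀ x ∈ S, r x ≤ r x₀
  · obtain ⟨x₀, hx₀, hmax⟩ := hmax
    exact (measure_mono hmax).trans hx₀
  push Not at hmax
  -- with no largest level in `S`, it is exhausted by the sublevel sets at its rational levels
  let Q := {q : ℚ // ν {y | r y ≤ q} ≤ ε}
  have hcover : S ⊆ ⋃ q : Q, {y | r y ≤ q} := by
    intro x hx
    obtain ⟨x', hx', hlt⟩ := hmax x hx
    obtain ⟨q, hxq, hqx'⟩ := exists_rat_btwn hlt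
    refine mem_iUnion.2 ⟨⟨q, (measure_mono fun y (hy : r y ≤ q) => ?_).trans hx'⟩, hxq.le⟩
    exact hy.trans hqx'.le
  have hmono : Monotone fun q : Q => {y | r y ≤ q} := fun q q' h y (hy : r y ≤ q) =>
    hy.trans (Rat.cast_le.mpr h)
  calc ν S ≤ ν (⋃ q : Q, {y | r y ≤ q}) := measure_mono hcover
    _ = ⨆ q : Q, ν {y | r y ≤ q} := hmono.directed_le.measure_iUnion
    _ ≤ ε := iSup_le fun q => q.2

lemma lintegral_ofReal_inv_mul_logPlus_rpow_lt_top {α : Type*} [MeasurableSpace α]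
    {ν : Measure α} [IsFiniteMeasure ν] {X : α → ℝ≥0∞} (hX : Measurable X)
    (hdist : ∀ ε, ν {x | X x ≤ ε} ≤ ε) {p : ℝ} (hp : 1 < p) :
    ∫⁻ x, ENNReal.ofReal ((X x).toReal * logPlus (1 / (X x).toReal) ^ p)⁻¹ ∂ν < ⊤ := by
  set c : ℕ → ℝ≥0∞ := fun m => ENNReal.ofReal (logPlus (2 ^ m) ^ p)⁻¹
  have hc : ∑' m, c m < ⊤ := by
    rw [← ENNReal.ofReal_tsum_of_nonneg (fun m => (inv_pos.2 (logPlus_rpow_pos _ p)).le)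
      (summable_inv_logPlus_two_pow_rpow hp)]
    exact ENNReal.ofReal_lt_top
  have hdyadic (m : ℕ) : 2 * 2 ^ m * c m * 2⁻¹ ^ m = 2 * c m := by
    rw [mul_right_comm, mul_assoc 2, ← mul_pow,
      ENNReal.mul_inv_cancel two_ne_zero ENNReal.ofNat_ne_top, one_pow, mul_one]
  have hmeas (m : ℕ) : MeasurableSet {x | X x ≤ 2⁻¹ ^ m} := hX measurableSet_Iic
  calc ∫⁻ x, ENNReal.ofReal ((X x).toReal * logPlus (1 / (X x).toReal) ^ p)⁻¹ ∂ν
      ≤ ∫⁻ x, 1 + ∑' m, {x | X x ≤ 2⁻¹ ^ m}.indicator (fun _ => 2 * 2 ^ m * c m) x ∂ν :=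
        lintegral_mono fun x => (ofReal_inv_mul_logPlus_rpow_le_tsum (by linarith) (X x)).trans_eq
          (by simp only [Set.indicator_apply, Set.mem_ofPred_eq, c])
    _ = ν univ + ∑' m, 2 * 2 ^ m * c m * ν {x | X x ≤ 2⁻¹ ^ m} := by
        rw [lintegral_add_left measurable_const, lintegral_const, one_mul, lintegral_tsum fun m =>
          (measurable_const.indicator (hmeas m)).aemeasurable]
        simp only [lintegral_indicator_const (hmeas _)]
    _ ≤ ν univ + ∑' m, 2 * 2 ^ m * c m * 2⁻¹ ^ m := by gcongr with m; exact hdist _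
    _ = ν univ + 2 * ∑' m, c m := by simp only [hdyadic, ENNReal.tsum_mul_left]
    _ < ⊤ :=
        ENNReal.add_lt_top.2 ⟨measure_lt_top ν univ, ENNReal.mul_lt_top ENNReal.ofNat_lt_top hc⟩

section SecondMoment

variable {E : Type*} [NormedAddCommGroup E] [InnerProductSpace ℝ E] [MeasurableSpace E]

lemma iSup_lintegral_inner_sq_le_lintegral_norm_sq (m : Measure E) :
    ⨆ z ∈ {z : E | ‖z‖ ≤ 1}, ∫⁻ y, ENNReal.ofReal ((inner ℝ y z : ℝ) ^ 2) ∂m ≤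
      ∫⁻ y, ENNReal.ofReal (‖y‖ ^ 2) ∂m := by
  refine iSup₂_le fun z (hz : ‖z‖ ≤ 1) => lintegral_mono fun y => ENNReal.ofReal_le_ofReal ?_
  have h : |inner ℝ y z| ≤ ‖y‖ :=
    (abs_real_inner_le_norm y z).trans (mul_le_of_le_one_right (norm_nonneg y) hz)
  simpa only [sq_abs] using pow_le_pow_left₀ (abs_nonneg _) h 2

lemma lintegral_norm_sq_le_finrank_mul_iSup [FiniteDimensional ℝ E] [OpensMeasurableSpace E]
    (m : Measure E) :
    ∫⁻ y, ENNReal.ofReal (‖y‖ ^ 2) ∂m ≤ Module.finrank ℝ E *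
      ⨆ z ∈ {z : E | ‖z‖ ≤ 1}, ∫⁻ y, ENNReal.ofReal ((inner ℝ y z : ℝ) ^ 2) ∂m := by
  let b := stdOrthonormalBasis ℝ E
  have hb (i) : ∫⁻ y, ENNReal.ofReal ((inner ℝ y (b i) : ℝ) ^ 2) ∂m ≤
      ⨆ z ∈ {z : E | ‖z‖ ≤ 1}, ∫⁻ y, ENNReal.ofReal ((inner ℝ y z : ℝ) ^ 2) ∂m :=
    le_iSup₂_of_le (b i) (b.orthonormal.1 i).le le_rfl
  calc ∫⁻ y, ENNReal.ofReal (‖y‖ ^ 2) ∂m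
      = ∑ i, ∫⁻ y, ENNReal.ofReal ((inner ℝ y (b i) : ℝ) ^ 2) ∂m := by
        simp_rw [← b.sum_sq_inner_right, real_inner_comm (b _)]
        rw [← lintegral_finsetSum' _ fun i _ => by fun_prop]
        simp_rw [ENNReal.ofReal_sum_of_nonneg fun i _ => sq_nonneg _]
    _ ≤ ∑ _i, ⨆ z ∈ {z : E | ‖z‖ ≤ 1}, ∫⁻ y, ENNReal.ofReal ((inner ℝ y z : ℝ) ^ 2) ∂m :=
        Finset.sum_le_sum fun i _ => hb i
    _ = _ := by simp

end SecondMoment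

theorem stmt5_general {d : ℕ} (μ : Measure (EuclideanSpace ℝ (Fin d)))
    (hint : (∫⁻ y in {y : EuclideanSpace ℝ (Fin d) | ‖y‖ ≤ 1},
        ENNReal.ofReal (‖y‖ ^ 2) ∂μ) < ⊤)
    (V : ℝ → ℝ)
    (hV : ∀ t : ℝ, ENNReal.ofReal (V t) =
      ⨆ z ∈ {z : EuclideanSpace ℝ (Fin d) | ‖z‖ ≤ 1},
        ∫⁻ y in {y : EuclideanSpace ℝ (Fin d) | ‖y‖ ≤ t},
          ENNReal.ofReal ((inner ℝ y z : ℝ) ^ 2) ∂μ)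
    (δ : ℝ) (hδ : 0 < δ) :
    (∫⁻ y in {y : EuclideanSpace ℝ (Fin d) | ‖y‖ ≤ 1},
      ENNReal.ofReal (‖y‖ ^ 2 /
        (V ‖y‖ * (max 1 (Real.log (1 / V ‖y‖))) ^ (1 + δ))) ∂μ) < ⊤ := by
  have hball (t : ℝ) : MeasurableSet {y : EuclideanSpace ℝ (Fin d) | ‖y‖ ≤ t} :=
    measurableSet_le measurable_norm measurable_const
  set g : EuclideanSpace ℝ (Fin d) → ℝ≥0∞ := fun y => ENNReal.ofReal (‖y‖ ^ 2)
  set ν := (μ.restrict {y | ‖y‖ ≤ 1}).withDensity g with hν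
  have : IsFiniteMeasure ν := isFiniteMeasure_withDensity hint.ne
  set X : EuclideanSpace ℝ (Fin d) → ℝ≥0∞ := fun y => ν {x | ‖x‖ ≤ ‖y‖}
  have hX : Measurable X :=
    (Monotone.measurable fun s t hst => measure_mono fun x (hx : ‖x‖ ≤ s) => hx.trans hst).comp
      measurable_norm
  have hXV (y : EuclideanSpace ℝ (Fin d)) (hy : ‖y‖ ≤ 1) :
      ENNReal.ofReal (V ‖y‖) ≤ X y ∧ X y ≤ d * ENNReal.ofReal (V ‖y‖) := by
    have hXy : X y = ∫⁻ x in {x | ‖x‖ ≤ ‖y‖}, g x ∂μ := by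
      rw [show X y = ν _ from rfl, hν, withDensity_apply _ (hball _),
        Measure.restrict_restrict_of_subset fun x hx => ?_]
      exact (hx : ‖x‖ ≤ ‖y‖).trans hy
    rw [hXy, hV]
    exact ⟨iSup_lintegral_inner_sq_le_lintegral_norm_sq _,
      by simpa only [finrank_euclideanSpace_fin] using
        lintegral_norm_sq_le_finrank_mul_iSup (μ.restrict {x | ‖x‖ ≤ ‖y‖})⟩
  calc _ ≤ ∫⁻ y in {y | ‖y‖ ≤ 1}, g y * (d * ENNReal.ofReal
          ((X y).toReal * logPlus (1 / (X y).toReal) ^ (1 + δ))⁻¹) ∂μ :=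
        setLIntegral_mono' (hball 1) fun y hy => ofReal_div_mul_logPlus_rpow_le (sq_nonneg _)
          (by linarith) (measure_ne_top ν _) (hXV y hy).1 (hXV y hy).2
    _ = d * ∫⁻ y, ENNReal.ofReal ((X y).toReal * logPlus (1 / (X y).toReal) ^ (1 + δ))⁻¹ ∂ν := by
        rw [lintegral_withDensity_eq_lintegral_mul_non_measurable _ (by fun_prop)
          (ae_of_all _ fun _ => ENNReal.ofReal_lt_top),
          ← lintegral_const_mul' _ _ (ENNReal.natCast_ne_top d)]
        simp only [Pi.mul_apply, mul_left_comm]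
        rfl
    _ < ⊤ := ENNReal.mul_lt_top (ENNReal.natCast_lt_top d)
        (lintegral_ofReal_inv_mul_logPlus_rpow_lt_top hX
          (measure_setOf_measure_sublevel_le ν fun y => ‖y‖) (by linarith))

/-- If `μ` is a Lévy measure supported on the unit ball with
`V(t) = sup_{|z|≤1} ∫_{|y|≤t} ⟪y,z⟫² dμ > 0` for all `t > 0`, then for every `δ > 0`,
`∫_{|y|≤1} |y|² / (V(|y|) (log₊(1/V(|y|)))^{1+δ}) dμ < ∞`, where `log₊ x = max 1 (log x)`. -/
theorem stmt5 {d : ℕ} (μ : Measure (EuclideanSpace ℝ (Fin d)))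
    (h0 : μ {0} = 0)
    (hsupp : μ {y : EuclideanSpace ℝ (Fin d) | 1 < ‖y‖} = 0)
    (hint : (∫⁻ y in {y : EuclideanSpace ℝ (Fin d) | ‖y‖ ≤ 1},
        ENNReal.ofReal (‖y‖ ^ 2) ∂μ) < ⊤)
    (V : ℝ → ℝ)
    (hV : ∀ t : ℝ, ENNReal.ofReal (V t) =
      ⨆ z ∈ {z : EuclideanSpace ℝ (Fin d) | ‖z‖ ≤ 1},
        ∫⁻ y in {y : EuclideanSpace ℝ (Fin d) | ‖y‖ ≤ t},
          ENNReal.ofReal ((inner ℝ y z : ℝ) ^ 2) ∂μ)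
    (hVpos : ∀ t : ℝ, 0 < t → 0 < V t)
    (δ : ℝ) (hδ : 0 < δ) :
    (∫⁻ y in {y : EuclideanSpace ℝ (Fin d) | ‖y‖ ≤ 1},
      ENNReal.ofReal (‖y‖ ^ 2 /
        (V ‖y‖ * (max 1 (Real.log (1 / V ‖y‖))) ^ (1 + δ))) ∂μ) < ⊤ :=
  stmt5_general μ hint V hV δ hδ
end

section
/- Let $b, W, P : (0,1] \to (0,\infty)$ be measurable functions with $\int_0^1 P(t)\,dt < \infty$, let $\alpha_0 \ge 0$, $0 < \delta < 1$, and set $\alpha = (1+\delta)(\alpha_0 + \delta)$. Suppose $\int_0^1 \frac{1}{t}\exp\left(-\frac{(\alpha_0+\delta)^2 b(t)^2}{2 t W(t)}\right) dt < \infty$. Then $\int_0^1 \frac{1}{t}\exp\left(-\frac{\alpha^2 b(t)^2}{2t\,(W(t) + b(t)^2 P(t))}\right) dt \le \int_0^1 \frac{1}{t}\exp\left(-\frac{(\alpha_0+\delta)^2 b(t)^2}{2 t W(t)}\right) dt + \frac{2(1+\delta^{-1})}{\alpha^2}\int_0^1 P(t)\,dt < \infty$. -/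
open MeasureTheory Set
open scoped ENNReal


lemma exp_split8 (δ x a c : ℝ) (hδ : 0 < δ) (hx : 0 ≤ x) (ha : 0 < a) (hc : 0 < c) :
    Real.exp (-(x / (a + c))) ≤
      Real.exp (-(x / ((1 + δ) * a))) + Real.exp (-(x / ((1 + δ⁻¹) * c))) := by
  rcases le_or_gt (a + c) ((1 + δ) * a) with h | h
  · have h1 : x / ((1 + δ) * a) ≤ x / (a + c) :=
      div_le_div_of_nonneg_left hx (by linarith) h
    have := Real.exp_le_exp.mpr (neg_le_neg h1)
    nlinarith [Real.exp_pos (-(x / ((1 + δ⁻¹) * c)))]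
  · have hδinv : 0 < δ⁻¹ := inv_pos.mpr hδ
    have hac : a + c ≤ (1 + δ⁻¹) * c := by
      have h2 : δ * a < c := by nlinarith
      nlinarith [mul_pos hδinv (show 0 < c - δ * a by linarith),
        mul_inv_cancel₀ hδ.ne']
    have h1 : x / ((1 + δ⁻¹) * c) ≤ x / (a + c) :=
      div_le_div_of_nonneg_left hx (by linarith) hac
    have := Real.exp_le_exp.mpr (neg_le_neg h1)
    nlinarith [Real.exp_pos (-(x / ((1 + δ) * a)))]

lemma point8 (bt Wt Pt α₀ δ α t : ℝ)
    (hbt : 0 < bt) (hWt : 0 < Wt) (hPt : 0 < Pt)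
    (hα₀ : 0 ≤ α₀) (hδ0 : 0 < δ)
    (hα : α = (1 + δ) * (α₀ + δ)) (ht0 : 0 < t) :
    t⁻¹ * Real.exp (-(α ^ 2 * bt ^ 2) / (2 * t * (Wt + bt ^ 2 * Pt)))
      ≤ t⁻¹ * Real.exp (-((α₀ + δ) ^ 2 * bt ^ 2) / (2 * t * Wt))
        + 2 * (1 + δ⁻¹) / α ^ 2 * Pt := by
  have hδinv : 0 < δ⁻¹ := inv_pos.mpr hδ0
  have hαpos : 0 < α := by rw [hα]; exact mul_pos (by linarith) (by linarith)
  set x : ℝ := α ^ 2 * bt ^ 2 / (2 * t) with hxdef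
  have hx : 0 ≤ x := by
    apply div_nonneg (by positivity) (by linarith)
  have hc : 0 < bt ^ 2 * Pt := mul_pos (pow_pos hbt 2) hPt
  have e1 : -(α ^ 2 * bt ^ 2) / (2 * t * (Wt + bt ^ 2 * Pt))
      = -(x / (Wt + bt ^ 2 * Pt)) := by
    rw [hxdef, div_div, neg_div]
  have split := exp_split8 δ x Wt (bt ^ 2 * Pt) hδ0 hx hWt hc
  -- first term
  have h1 : -(x / ((1 + δ) * Wt)) ≤ -((α₀ + δ) ^ 2 * bt ^ 2) / (2 * t * Wt) := by
    rw [neg_div, neg_le_neg_iff]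
    rw [hxdef, div_div, div_le_div_iff₀ (by positivity) (by positivity)]
    rw [hα]
    nlinarith [mul_pos ht0 hWt, sq_nonneg bt, sq_nonneg (α₀ + δ),
      mul_nonneg (mul_nonneg (sq_nonneg (α₀ + δ)) (sq_nonneg bt))
        (mul_pos ht0 hWt).le,
      mul_nonneg hδ0.le (mul_nonneg (mul_nonneg (sq_nonneg (α₀ + δ)) (sq_nonneg bt))
        (mul_pos ht0 hWt).le)]
  have hexp1 : Real.exp (-(x / ((1 + δ) * Wt)))
      ≤ Real.exp (-((α₀ + δ) ^ 2 * bt ^ 2) / (2 * t * Wt)) := Real.exp_le_exp.mpr h1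
  -- second term
  have hy : x / ((1 + δ⁻¹) * (bt ^ 2 * Pt)) = α ^ 2 / (2 * t * (1 + δ⁻¹) * Pt) := by
    rw [hxdef]; field_simp
  have hypos : 0 < α ^ 2 / (2 * t * (1 + δ⁻¹) * Pt) := by positivity
  have hexp2 : Real.exp (-(x / ((1 + δ⁻¹) * (bt ^ 2 * Pt))))
      ≤ 2 * t * (1 + δ⁻¹) * Pt / α ^ 2 := by
    rw [hy]
    have hyle := Real.add_one_le_exp (α ^ 2 / (2 * t * (1 + δ⁻¹) * Pt))
    calc Real.exp (-(α ^ 2 / (2 * t * (1 + δ⁻¹) * Pt)))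
        = (Real.exp (α ^ 2 / (2 * t * (1 + δ⁻¹) * Pt)))⁻¹ := Real.exp_neg _
      _ ≤ (α ^ 2 / (2 * t * (1 + δ⁻¹) * Pt))⁻¹ := by
          apply inv_anti₀ hypos; linarith
      _ = 2 * t * (1 + δ⁻¹) * Pt / α ^ 2 := by rw [inv_div]
  have h2' : t⁻¹ * Real.exp (-(x / ((1 + δ⁻¹) * (bt ^ 2 * Pt))))
      ≤ 2 * (1 + δ⁻¹) / α ^ 2 * Pt := by
    calc t⁻¹ * Real.exp (-(x / ((1 + δ⁻¹) * (bt ^ 2 * Pt))))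
        ≤ t⁻¹ * (2 * t * (1 + δ⁻¹) * Pt / α ^ 2) :=
          mul_le_mul_of_nonneg_left hexp2 (inv_nonneg.mpr ht0.le)
      _ = 2 * (1 + δ⁻¹) / α ^ 2 * Pt := by field_simp
  calc t⁻¹ * Real.exp (-(α ^ 2 * bt ^ 2) / (2 * t * (Wt + bt ^ 2 * Pt)))
      = t⁻¹ * Real.exp (-(x / (Wt + bt ^ 2 * Pt))) := by rw [e1]
    _ ≤ t⁻¹ * (Real.exp (-(x / ((1 + δ) * Wt)))
          + Real.exp (-(x / ((1 + δ⁻¹) * (bt ^ 2 * Pt))))) :=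
        mul_le_mul_of_nonneg_left split (inv_nonneg.mpr ht0.le)
    _ = t⁻¹ * Real.exp (-(x / ((1 + δ) * Wt)))
          + t⁻¹ * Real.exp (-(x / ((1 + δ⁻¹) * (bt ^ 2 * Pt)))) := mul_add _ _ _
    _ ≤ t⁻¹ * Real.exp (-((α₀ + δ) ^ 2 * bt ^ 2) / (2 * t * Wt))
          + 2 * (1 + δ⁻¹) / α ^ 2 * Pt :=
        add_le_add (mul_le_mul_of_nonneg_left hexp1 (inv_nonneg.mpr ht0.le)) h2'

/-- Comparison of exponential integrals used in the proof that `V` can be replaced by `V₁`: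
if `∫₀¹ t⁻¹ exp(-(α₀+δ)² b(t)²/(2tW(t))) dt < ∞` and `∫₀¹ P < ∞`, then with
`α = (1+δ)(α₀+δ)`,
`∫₀¹ t⁻¹ exp(-α² b(t)²/(2t(W(t)+b(t)²P(t)))) dt
  ≤ ∫₀¹ t⁻¹ exp(-(α₀+δ)² b(t)²/(2tW(t))) dt + 2(1+δ⁻¹)/α² ∫₀¹ P dt < ∞`. -/
theorem stmt8 (b W P : ℝ → ℝ) (α₀ δ α : ℝ)
    (hb : ∀ t ∈ Ioc (0 : ℝ) 1, 0 < b t)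
    (hW : ∀ t ∈ Ioc (0 : ℝ) 1, 0 < W t)
    (hP : ∀ t ∈ Ioc (0 : ℝ) 1, 0 < P t)
    (hbm : Measurable b) (hWm : Measurable W) (hPm : Measurable P)
    (hα₀ : 0 ≤ α₀) (hδ0 : 0 < δ) (hδ1 : δ < 1)
    (hα : α = (1 + δ) * (α₀ + δ))
    (hPint : (∫⁻ t in Ioc (0 : ℝ) 1, ENNReal.ofReal (P t)) < ⊤)
    (hfin : (∫⁻ t in Ioc (0 : ℝ) 1,
        ENNReal.ofReal (t⁻¹ * Real.exp (-((α₀ + δ) ^ 2 * b t ^ 2) / (2 * t * W t)))) < ⊤) :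
    (∫⁻ t in Ioc (0 : ℝ) 1,
        ENNReal.ofReal (t⁻¹ *
          Real.exp (-(α ^ 2 * b t ^ 2) / (2 * t * (W t + b t ^ 2 * P t)))))
      ≤ (∫⁻ t in Ioc (0 : ℝ) 1,
            ENNReal.ofReal (t⁻¹ * Real.exp (-((α₀ + δ) ^ 2 * b t ^ 2) / (2 * t * W t))))
          + ENNReal.ofReal (2 * (1 + δ⁻¹) / α ^ 2) *
              ∫⁻ t in Ioc (0 : ℝ) 1, ENNReal.ofReal (P t) ∧
    (∫⁻ t in Ioc (0 : ℝ) 1,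
        ENNReal.ofReal (t⁻¹ *
          Real.exp (-(α ^ 2 * b t ^ 2) / (2 * t * (W t + b t ^ 2 * P t))))) < ⊤ := by
  have hαpos : 0 < α := by rw [hα]; exact mul_pos (by linarith) (by linarith)
  have hC : 0 ≤ 2 * (1 + δ⁻¹) / α ^ 2 := by positivity
  have hmg : Measurable fun t : ℝ =>
      ENNReal.ofReal (t⁻¹ * Real.exp (-((α₀ + δ) ^ 2 * b t ^ 2) / (2 * t * W t))) := by
    apply Measurable.ennreal_ofReal
    apply Measurable.mul measurable_inv
    exact (Measurable.div ((measurable_const.mul (hbm.pow_const 2)).neg)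
      ((measurable_const.mul measurable_id).mul hWm)).exp
  have key : (∫⁻ t in Ioc (0 : ℝ) 1,
      ENNReal.ofReal (t⁻¹ *
        Real.exp (-(α ^ 2 * b t ^ 2) / (2 * t * (W t + b t ^ 2 * P t)))))
      ≤ (∫⁻ t in Ioc (0 : ℝ) 1,
          ENNReal.ofReal (t⁻¹ * Real.exp (-((α₀ + δ) ^ 2 * b t ^ 2) / (2 * t * W t))))
        + ENNReal.ofReal (2 * (1 + δ⁻¹) / α ^ 2) *
            ∫⁻ t in Ioc (0 : ℝ) 1, ENNReal.ofReal (P t) := by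
    have step1 : (∫⁻ t in Ioc (0 : ℝ) 1,
        ENNReal.ofReal (t⁻¹ *
          Real.exp (-(α ^ 2 * b t ^ 2) / (2 * t * (W t + b t ^ 2 * P t)))))
        ≤ ∫⁻ t in Ioc (0 : ℝ) 1,
            (ENNReal.ofReal (t⁻¹ * Real.exp (-((α₀ + δ) ^ 2 * b t ^ 2) / (2 * t * W t)))
              + ENNReal.ofReal (2 * (1 + δ⁻¹) / α ^ 2 * P t)) := by
      refine lintegral_mono_ae ?_
      filter_upwards [ae_restrict_mem measurableSet_Ioc] with t ht
      calc ENNReal.ofReal (t⁻¹ *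
            Real.exp (-(α ^ 2 * b t ^ 2) / (2 * t * (W t + b t ^ 2 * P t))))
          ≤ ENNReal.ofReal (t⁻¹ *
              Real.exp (-((α₀ + δ) ^ 2 * b t ^ 2) / (2 * t * W t))
              + 2 * (1 + δ⁻¹) / α ^ 2 * P t) :=
            ENNReal.ofReal_le_ofReal
              (point8 (b t) (W t) (P t) α₀ δ α t (hb t ht) (hW t ht) (hP t ht)
                hα₀ hδ0 hα ht.1)
        _ ≤ _ := ENNReal.ofReal_add_le
    rw [lintegral_add_left hmg] at step1
    have step2 : (∫⁻ t in Ioc (0 : ℝ) 1,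
        ENNReal.ofReal (2 * (1 + δ⁻¹) / α ^ 2 * P t))
        = ENNReal.ofReal (2 * (1 + δ⁻¹) / α ^ 2) *
            ∫⁻ t in Ioc (0 : ℝ) 1, ENNReal.ofReal (P t) := by
      simp_rw [ENNReal.ofReal_mul hC]
      exact lintegral_const_mul' _ _ ENNReal.ofReal_ne_top
    rwa [step2] at step1
  refine ⟨key, lt_of_le_of_lt key ?_⟩
  exact ENNReal.add_lt_top.mpr ⟨hfin, ENNReal.mul_lt_top ENNReal.ofReal_lt_top hPint⟩
end

section
/- Let $(A_n)_{n \ge 1}$ and $(B_n)_{n \ge 1}$ be events in a probability space such that for every $n$, the event $B_n$ is independent of the $\sigma$-algebra generated by $A_1, \ldots, A_n$. Then for every $N \ge 1$, $\mathbb{P}\left(\bigcup_{n=N}^{\infty} (A_n \cap B_n)\right) \ge \left(\inf_{n \ge N} \mathbb{P}(B_n)\right) \cdot \mathbb{P}\left(\bigcup_{n=N}^{\infty} A_n\right)$. -/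
open MeasureTheory Set
open scoped ENNReal
open Function

/-! Split `⋃_{n ≥ N} A n` into the disjoint events `D k = A (k + N) \ ⋃_{i < k} A (i + N)`
("the first `A` after time `N` occurs at time `k + N`"). Each `D k` lies in the σ-algebra
generated by `A 0, …, A (k + N)`, so `ℙ (D k ∩ B (k + N)) = ℙ (B (k + N)) ℙ (D k)`, and summing
over the disjoint `D k` gives the bound. -/

theorem measurableSet_disjointed_of_forall_le {α ι : Type*} [Preorder ι]
    [LocallyFiniteOrderBot ι] {m : MeasurableSpace α} {f : ι → Set α} {i : ι}
    (hf : ∀ j ≤ i, MeasurableSet[m] (f j)) : MeasurableSet[m] (disjointed f i) := by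
  rw [disjointed_eq_inter_compl]
  exact (hf i le_rfl).inter <|
    (finite_Iio i).measurableSet_biInter fun j hj => (hf j hj.le).compl

-- `S` need not be measurable: `μ.restrict D S = μ (S ∩ D)` for every `S` once `D` is measurable.
theorem tsum_measure_inter_le_of_pairwise_disjoint {α ι : Type*} [MeasurableSpace α]
    [Countable ι] (μ : Measure α) {D : ι → Set α} (hD : ∀ i, MeasurableSet (D i))
    (hdisj : Pairwise (Disjoint on D)) (S : Set α) : ∑' i, μ (S ∩ D i) ≤ μ S :=
  calc ∑' i, μ (S ∩ D i) = μ.restrict (⋃ i, D i) S := by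
        rw [Measure.restrict_iUnion hdisj hD, Measure.sum_apply_of_countable]
        exact tsum_congr fun i => (Measure.restrict_apply' (hD i)).symm
    _ ≤ μ S := Measure.restrict_apply_le _ _

theorem mul_measure_iUnion_le_of_inter_eq_mul {α ι : Type*} [MeasurableSpace α] [Countable ι]
    (μ : Measure α) {D E : ι → Set α} {S : Set α} {c : ℝ≥0∞}
    (hD : ∀ i, MeasurableSet (D i)) (hdisj : Pairwise (Disjoint on D))
    (hc : ∀ i, c ≤ μ (E i)) (hindep : ∀ i, μ (E i ∩ D i) = μ (E i) * μ (D i))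
    (hS : ∀ i, D i ∩ E i ⊆ S) : c * μ (⋃ i, D i) ≤ μ S :=
  calc c * μ (⋃ i, D i) = ∑' i, c * μ (D i) := by
        rw [measure_iUnion hdisj hD, ENNReal.tsum_mul_left]
    _ ≤ ∑' i, μ (S ∩ D i) := ENNReal.tsum_le_tsum fun i =>
        calc c * μ (D i) ≤ μ (E i) * μ (D i) := mul_le_mul_left (hc i) _
          _ = μ (E i ∩ D i) := (hindep i).symm
          _ ≤ μ (S ∩ D i) := measure_mono fun x ⟨hE, hD⟩ => ⟨hS i ⟨hD, hE⟩, hD⟩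
    _ ≤ μ S := tsum_measure_inter_le_of_pairwise_disjoint μ hD hdisj S

theorem stmt9_general {Ω : Type*} [MeasurableSpace Ω] (ℙ : Measure Ω)
    (A B : ℕ → Set Ω)
    (hA : ∀ n, MeasurableSet (A n))
    (hindep : ∀ n : ℕ, ∀ C : Set Ω,
      MeasurableSet[MeasurableSpace.generateFrom {s | ∃ i ≤ n, s = A i}] C →
        ℙ (B n ∩ C) = ℙ (B n) * ℙ C) :
    ∀ N : ℕ, (⨅ n ∈ Ici N, ℙ (B n)) * ℙ (⋃ n ∈ Ici N, A n) ≤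
      ℙ (⋃ n ∈ Ici N, A n ∩ B n) := by
  intro N
  set D := disjointed fun k => A (k + N)
  have hD_past : ∀ k, MeasurableSet[MeasurableSpace.generateFrom {s | ∃ i ≤ k + N, s = A i}]
      (D k) := fun k => measurableSet_disjointed_of_forall_le fun j hj =>
    MeasurableSpace.measurableSet_generateFrom ⟨j + N, by omega, rfl⟩
  have hS : ∀ k, D k ∩ B (k + N) ⊆ ⋃ n ∈ Ici N, A n ∩ B n := fun k =>
    (inter_subset_inter_left _ (disjointed_subset _ k)).trans <|
      subset_biUnion_of_mem (u := fun n => A n ∩ B n) (Nat.le_add_left N k)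
  have hbound := mul_measure_iUnion_le_of_inter_eq_mul ℙ
    (MeasurableSet.disjointed fun k => hA (k + N)) (disjoint_disjointed _) (fun k => biInf_le (fun n => ℙ (B n)) (Nat.le_add_left N k))
    (fun k => hindep _ _ (hD_past k)) hS
  rwa [iUnion_disjointed, ← iUnion_ge_eq_iUnion_nat_add] at hbound

/-- Feller–Chung lemma: if for each `n` the event `B n` is independent of the σ-algebra
generated by `A 1, …, A n`, then
`ℙ(⋃_{n≥N} (A n ∩ B n)) ≥ (inf_{n≥N} ℙ(B n)) · ℙ(⋃_{n≥N} A n)`. -/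
theorem stmt9 {Ω : Type*} [MeasurableSpace Ω] (ℙ : Measure Ω) [IsProbabilityMeasure ℙ]
    (A B : ℕ → Set Ω)
    (hA : ∀ n, MeasurableSet (A n)) (hB : ∀ n, MeasurableSet (B n))
    (hindep : ∀ n : ℕ, ∀ C : Set Ω,
      MeasurableSet[MeasurableSpace.generateFrom {s | ∃ i ≤ n, s = A i}] C →
        ℙ (B n ∩ C) = ℙ (B n) * ℙ C) :
    ∀ N : ℕ, (⨅ n ∈ Ici N, ℙ (B n)) * ℙ (⋃ n ∈ Ici N, A n) ≤
      ℙ (⋃ n ∈ Ici N, A n ∩ B n) :=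
  stmt9_general ℙ A B hA hindep
end
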